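/- Let p ≥ q be positive integers. A signed graph Ĝ = (G, σ) admits a (2p, q)-flow if and only if the graph (2p-2q)G (each edge of G replaced by 2p-2q parallel copies) admits an orientation D such that for every vertex v, the out-degree minus the in-degree of v in D is congruent modulo 4p to 2p times the positive degree of v in Ĝ. -/

import Mathlib

open Finset

attribute [local instance] Classical.propDecidable

/-- A finite multigraph without loops: each edge has an unordered pair of
distinct endpoints. -/
structure Multigraph (V : Type) (E : Type) where
  ends : E → Sym2 V
  noLoop : ∀ e, ¬ (ends e).IsDiag

variable {V E : Type}

/-- `D` is an orientation of `G`: each edge `e` is directed from `(D e).1` to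
`(D e).2`, and these are the two endpoints of `e`. -/
def IsOrientation (G : Multigraph V E) (D : E → V × V) : Prop :=
  ∀ e, s((D e).1, (D e).2) = G.ends e

/-- Sum of `f` over the arcs leaving `v` (out-arcs at `v`). -/
noncomputable def outSum [Fintype E] {R : Type} [AddCommMonoid R]
    (D : E → V × V) (f : E → R) (v : V) : R :=
  ∑ e ∈ univ.filter (fun e => (D e).1 = v), f e

/-- Sum of `f` over the arcs entering `v` (in-arcs at `v`). -/
noncomputable def inSum [Fintype E] {R : Type} [AddCommMonoid R]
    (D : E → V × V) (f : E → R) (v : V) : R :=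
  ∑ e ∈ univ.filter (fun e => (D e).2 = v), f e

/-- A circular `r`-flow in the signed graph `(G, σ)` (positive edges are those
with `σ e = true`). -/
def IsCircularFlow [Fintype E] (G : Multigraph V E) (σ : E → Bool) (r : ℝ)
    (D : E → V × V) (f : E → ℝ) : Prop :=
  IsOrientation G D ∧
  (∀ e, |f e| < r) ∧
  (∀ e, σ e = true → 1 ≤ |f e| ∧ |f e| ≤ r - 1) ∧
  (∀ e, σ e = false → |f e| ≤ r / 2 - 1 ∨ r / 2 + 1 ≤ |f e|) ∧
  (∀ v, outSum D f v = inSum D f v)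

/-- The number of edges of `F` incident to `v` (the degree of `v` in the
subgraph with edge set `F`). -/
noncomputable def degIn [Fintype E] (G : Multigraph V E) (F : Finset E) (v : V) : ℕ :=
  (F.filter (fun e => v ∈ G.ends e)).card

/-- The set of negative edges of the signature `σ`. -/
noncomputable def negEdges (E : Type) [Fintype E] (σ : E → Bool) : Finset E :=
  univ.filter (fun e => σ e = false)

/-- The set of positive edges of the signature `σ`. -/
noncomputable def posEdges (E : Type) [Fintype E] (σ : E → Bool) : Finset E :=
  univ.filter (fun e => σ e = true)

/-- Two signatures on `G` are inversing equivalent iff one is obtained from the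
other by inversing on a sequence of cycles; equivalently, the symmetric
difference of their negative edge sets induces an even-degree subgraph. -/
def InversingEquiv [Fintype E] (G : Multigraph V E) (σ σ' : E → Bool) : Prop :=
  ∀ v, Even (degIn G (symmDiff (negEdges E σ) (negEdges E σ')) v)

/-- A `(p, q)`-flow in the signed graph `(G, σ)`: an orientation together with
integer values, with `f e ∈ {q, …, p - q}` on positive edges,
`f e ∈ {0, …, p/2 - q} ∪ {p/2 + q, …, p - 1}` on negative edges, and exact
conservation at every vertex. -/
def IsPQFlow [Fintype E] (G : Multigraph V E) (σ : E → Bool) (p q : ℤ)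
    (D : E → V × V) (f : E → ℤ) : Prop :=
  IsOrientation G D ∧
  (∀ e, σ e = true → q ≤ f e ∧ f e ≤ p - q) ∧
  (∀ e, σ e = false →
    (0 ≤ f e ∧ f e ≤ p / 2 - q) ∨ (p / 2 + q ≤ f e ∧ f e ≤ p - 1)) ∧
  (∀ v, outSum D f v = inSum D f v)

/-- A modulo `(p, q)`-flow: same as a `(p, q)`-flow, except conservation is
only required modulo `p` at every vertex. -/
def IsModPQFlow [Fintype E] (G : Multigraph V E) (σ : E → Bool) (p q : ℤ)
    (D : E → V × V) (f : E → ℤ) : Prop :=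
  IsOrientation G D ∧
  (∀ e, σ e = true → q ≤ f e ∧ f e ≤ p - q) ∧
  (∀ e, σ e = false →
    (0 ≤ f e ∧ f e ≤ p / 2 - q) ∨ (p / 2 + q ≤ f e ∧ f e ≤ p - 1)) ∧
  (∀ v, p ∣ (outSum D f v - inSum D f v))

/-- Out-degree minus in-degree of `v` under orientation `D`, counted over the
edge set `F`. -/
noncomputable def netDeg [Fintype E] (D : E → V × V) (F : Finset E) (v : V) : ℤ :=
  ((F.filter (fun e => (D e).1 = v)).card : ℤ) -
    ((F.filter (fun e => (D e).2 = v)).card : ℤ)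

/-- `(G, σ)` admits a modulo `ℓ`-orientation: there is an inversing-equivalent
signature `σ'` and an orientation `D` such that at each vertex,
`(ℓ-1) · (out minus in degree over σ'-positive edges)` equals the
`(out minus in degree over σ'-negative edges)`. -/
def HasModuloOrientation [Fintype E] (G : Multigraph V E) (σ : E → Bool)
    (ℓ : ℤ) : Prop :=
  ∃ σ' : E → Bool, InversingEquiv G σ σ' ∧
    ∃ D : E → V × V, IsOrientation G D ∧
      ∀ v, (ℓ - 1) * netDeg D (posEdges E σ') v = netDeg D (negEdges E σ') v

/-- The multigraph `mG`: each edge of `G` is replaced by `m` parallel copies. -/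
def parallelCopies (m : ℕ) (G : Multigraph V E) : Multigraph V (E × Fin m) where
  ends := fun x => G.ends x.1
  noLoop := fun x => G.noLoop x.1

-- ===== auxiliary lemmas =====
noncomputable def edgeTerm (D : E → V × V) (v : V) (e : E) : ℤ :=
  (if (D e).1 = v then 1 else 0) - (if (D e).2 = v then 1 else 0)

lemma flowDiff_eq [Fintype E] (D : E → V × V) (f : E → ℤ) (v : V) :
    outSum D f v - inSum D f v = ∑ e, f e * edgeTerm D v e := by
  unfold outSum inSum edgeTerm
  rw [sum_filter, sum_filter, ← Finset.sum_sub_distrib]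
  exact Finset.sum_congr rfl fun e _ => by split_ifs <;> ring

lemma netDeg_eq [Fintype E] (D : E → V × V) (F : Finset E) (v : V) :
    netDeg D F v = ∑ e ∈ F, edgeTerm D v e := by
  unfold netDeg edgeTerm
  rw [card_filter, card_filter]
  push_cast
  rw [← Finset.sum_sub_distrib]

lemma orient_pair {G : Multigraph V E} {D : E → V × V} (hD : IsOrientation G D)
    {x : V × V} (e : E) (h : s(x.1, x.2) = G.ends e) : x = D e ∨ x = Prod.swap (D e) := by
  have h2 := hD e
  rw [← h2] at h
  have := Sym2.eq_iff.1 h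
  rcases this with ⟨h1, h2⟩ | ⟨h1, h2⟩
  · left; ext <;> simp [h1, h2]
  · right; ext <;> simp [h1, h2]

lemma orient_ne {G : Multigraph V E} {D : E → V × V} (hD : IsOrientation G D) (e : E) :
    (D e).1 ≠ (D e).2 := by
  intro h
  exact G.noLoop e (by rw [← hD e]; exact Sym2.mk_isDiag_iff.2 h)

lemma mem_ends_iff {G : Multigraph V E} {D : E → V × V} (hD : IsOrientation G D) (e : E) (v : V) :
    v ∈ G.ends e ↔ (D e).1 = v ∨ (D e).2 = v := by
  rw [← hD e, Sym2.mem_iff]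
  constructor
  · rintro (h | h) <;> [left; right] <;> exact h.symm
  · rintro (h | h) <;> [left; right] <;> exact h.symm

lemma edgeTerm_mem {G : Multigraph V E} {D : E → V × V} (hD : IsOrientation G D) (e : E) (v : V)
    (h : v ∈ G.ends e) : edgeTerm D v e = 1 ∨ edgeTerm D v e = -1 := by
  unfold edgeTerm
  rcases (mem_ends_iff hD e v).1 h with h1 | h2
  · left; rw [if_pos h1, if_neg (by rw [← h1]; exact fun hh => orient_ne hD e hh.symm)]; ring
  · right; rw [if_pos h2, if_neg (by rw [← h2]; exact fun hh => orient_ne hD e hh)]; ring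

lemma edgeTerm_not_mem {G : Multigraph V E} {D : E → V × V} (hD : IsOrientation G D) (e : E) (v : V)
    (h : ¬ v ∈ G.ends e) : edgeTerm D v e = 0 := by
  unfold edgeTerm
  rw [mem_ends_iff hD] at h
  push_neg at h
  rw [if_neg h.1, if_neg h.2]; ring

noncomputable def vSupp [Fintype E] (G : Multigraph V E) : Finset V :=
  univ.image (fun e => (G.ends e).out.1) ∪ univ.image (fun e => (G.ends e).out.2)

lemma ends_mem_vSupp [Fintype E] (G : Multigraph V E) (e : E) (v : V) (h : v ∈ G.ends e) :
    v ∈ vSupp G := by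
  have h2 : Sym2.mk (G.ends e).out.1 (G.ends e).out.2 = G.ends e := (G.ends e).out_eq
  rw [← h2, Sym2.mem_iff] at h
  unfold vSupp
  rcases h with h | h <;> rw [Finset.mem_union]
  · left; exact Finset.mem_image.2 ⟨e, mem_univ e, h.symm⟩
  · right; exact Finset.mem_image.2 ⟨e, mem_univ e, h.symm⟩

lemma mem_vSupp_of_endpoint {G : Multigraph V E} [Fintype E] {D : E → V × V}
    (hD : IsOrientation G D) (e : E) :
    (D e).1 ∈ vSupp G ∧ (D e).2 ∈ vSupp G := by
  constructor <;> apply ends_mem_vSupp G e <;> rw [mem_ends_iff hD] <;> simp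

-- number of copies of e oriented the same way as D e
noncomputable def agree (m : ℕ) (D : E → V × V) (D' : E × Fin m → V × V) (e : E) : ℕ :=
  (univ.filter (fun i : Fin m => D' (e, i) = D e)).card

lemma agree_le [Fintype E] (m : ℕ) (D : E → V × V) (D' : E × Fin m → V × V) (e : E) :
    agree m D D' e ≤ m := by
  unfold agree
  calc (univ.filter (fun i : Fin m => D' (e, i) = D e)).card ≤ (univ : Finset (Fin m)).card :=
        card_filter_le _ _
    _ = m := by simp

lemma edgeTerm_swap (D : E → V × V) (v : V) (e : E) :
    edgeTerm (fun e' => Prod.swap (D e')) v e = - edgeTerm D v e := by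
  unfold edgeTerm; simp [Prod.swap]

lemma netDeg_copies [Fintype E] {m : ℕ} {G : Multigraph V E} {D : E → V × V}
    {D' : E × Fin m → V × V} (hD : IsOrientation G D)
    (hD' : IsOrientation (parallelCopies m G) D') (v : V) :
    netDeg D' univ v = ∑ e : E, (2 * (agree m D D' e : ℤ) - m) * edgeTerm D v e := by
  rw [netDeg_eq, Fintype.sum_prod_type]
  apply Finset.sum_congr rfl
  intro e _
  have hcases : ∀ i : Fin m, D' (e, i) = D e ∨ D' (e, i) = Prod.swap (D e) := by
    intro i
    exact orient_pair hD e (hD' (e, i))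
  have hterm : ∀ i : Fin m, edgeTerm D' v (e, i) =
      if D' (e, i) = D e then edgeTerm D v e else - edgeTerm D v e := by
    intro i
    by_cases h : D' (e, i) = D e
    · rw [if_pos h]; unfold edgeTerm; rw [h]
    · rw [if_neg h]
      rcases hcases i with h1 | h2
      · exact absurd h1 h
      · unfold edgeTerm; rw [h2]; simp [Prod.swap]
  calc (∑ i : Fin m, edgeTerm D' v (e, i))
      = ∑ i : Fin m, (if D' (e, i) = D e then edgeTerm D v e else - edgeTerm D v e) :=
        Finset.sum_congr rfl fun i _ => hterm i
    _ = (agree m D D' e : ℤ) * edgeTerm D v e +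
        ((univ.filter (fun i : Fin m => ¬ D' (e, i) = D e)).card : ℤ) * (- edgeTerm D v e) := by
        rw [Finset.sum_ite, Finset.sum_const, Finset.sum_const]
        unfold agree; push_cast; ring
    _ = (2 * (agree m D D' e : ℤ) - m) * edgeTerm D v e := by
        have h0 := Finset.card_filter_add_card_filter_not (s := (univ : Finset (Fin m)))
          (p := fun i : Fin m => D' (e, i) = D e)
        simp only [Finset.card_univ, Fintype.card_fin] at h0
        have h2 : ((univ.filter (fun i : Fin m => ¬ D' (e, i) = D e)).card : ℤ)
            = m - agree m D D' e := by unfold agree; omega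
        rw [h2]; ring

lemma degIn_pos_eq [Fintype E] (G : Multigraph V E) (σ : E → Bool) (v : V) :
    (degIn G (posEdges E σ) v : ℤ) =
      ∑ e, (if σ e = true ∧ v ∈ G.ends e then (1 : ℤ) else 0) := by
  unfold degIn posEdges
  rw [Finset.filter_filter, Finset.card_filter]
  push_cast
  rfl

lemma parity_sum [Fintype E] {G : Multigraph V E} {D : E → V × V} (hD : IsOrientation G D)
    (σ : E → Bool) (s : E → ℤ) (hs : ∀ e, (2:ℤ) ∣ (s e - if σ e then 1 else 0)) (v : V) :
    (2:ℤ) ∣ (∑ e, s e * edgeTerm D v e) - (degIn G (posEdges E σ) v : ℤ) := by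
  rw [degIn_pos_eq, ← Finset.sum_sub_distrib]
  apply Finset.dvd_sum
  intro e _
  have hse := hs e
  by_cases hm : v ∈ G.ends e
  · rcases edgeTerm_mem hD e v hm with h1 | h1 <;> rw [h1] <;> by_cases hσ : σ e = true <;>
      simp only [hσ, if_pos, if_neg, hm, and_true, if_true] <;> simp [hσ] at hse ⊢ <;> omega
  · rw [edgeTerm_not_mem hD e v hm]
    simp [hm]

inductive Chain (D : E → V × V) (f : E → ℤ) : V → V → List E → Prop
  | nil (v : V) : Chain D f v v []
  | cons {a b u : V} {e : E} {l : List E} (hf : f e ≠ 0) (hDe : D e = (a, b))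
      (h : Chain D f b u l) : Chain D f a u (e :: l)

def Step (D : E → V × V) (f : E → ℤ) (x y : V) : Prop :=
  ∃ e, f e ≠ 0 ∧ D e = (x, y)

lemma chain_append {D : E → V × V} {f : E → ℤ} {x y z : V} {l₁ l₂ : List E}
    (h1 : Chain D f x y l₁) (h2 : Chain D f y z l₂) : Chain D f x z (l₁ ++ l₂) := by
  induction h1 with
  | nil => exact h2
  | cons hf hDe h ih => exact Chain.cons hf hDe (ih h2)

lemma chain_of_rtg {D : E → V × V} {f : E → ℤ} {x y : V}
    (h : Relation.ReflTransGen (Step D f) x y) : ∃ l, Chain D f x y l := by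
  induction h with
  | refl => exact ⟨[], Chain.nil x⟩
  | tail h hstep ih =>
    obtain ⟨l, hl⟩ := ih
    obtain ⟨e, hf, hDe⟩ := hstep
    exact ⟨l ++ [e], chain_append hl (Chain.cons hf hDe (Chain.nil _))⟩

lemma chain_split {D : E → V × V} {f : E → ℤ} {x z : V} {l₁ l₂ : List E}
    (h : Chain D f x z (l₁ ++ l₂)) : ∃ y, Chain D f x y l₁ ∧ Chain D f y z l₂ := by
  induction l₁ generalizing x with
  | nil => exact ⟨x, Chain.nil x, h⟩
  | cons e l ih =>
    cases h with
    | cons hf hDe h' =>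
      obtain ⟨y, hy1, hy2⟩ := ih h'
      exact ⟨y, Chain.cons hf hDe hy1, hy2⟩

lemma chain_cons_inv {D : E → V × V} {f : E → ℤ} {x z : V} {e : E} {l : List E}
    (h : Chain D f x z (e :: l)) : f e ≠ 0 ∧ ∃ b, D e = (x, b) ∧ Chain D f b z l := by
  cases h with
  | cons hf hDe h' => exact ⟨hf, _, hDe, h'⟩

lemma chain_mem_ne_zero {D : E → V × V} {f : E → ℤ} {x y : V} {l : List E}
    (h : Chain D f x y l) {e : E} (he : e ∈ l) : f e ≠ 0 := by
  induction h with
  | nil => cases he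
  | cons hf hDe h ih =>
    rcases List.mem_cons.1 he with rfl | hmem
    · exact hf
    · exact ih hmem

lemma chain_nodup {D : E → V × V} {f : E → ℤ} {x y : V}
    (h : ∃ l, Chain D f x y l) : ∃ l, Chain D f x y l ∧ l.Nodup := by
  have hn : ∃ n, ∃ l, Chain D f x y l ∧ l.length = n := by
    obtain ⟨l, hl⟩ := h; exact ⟨l.length, l, hl, rfl⟩
  classical
  obtain ⟨l, hl, hlen⟩ := Nat.find_spec hn
  refine ⟨l, hl, ?_⟩
  by_contra hnd
  -- extract duplicate: l = l₁ ++ e :: l₂ with e ∈ l₂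
  have hdup : ∃ e l₁ l₂, l = l₁ ++ e :: l₂ ∧ e ∈ l₂ := by
    clear hl hlen
    induction l with
    | nil => exact absurd List.nodup_nil hnd
    | cons a t ih =>
      by_cases hat : a ∈ t
      · exact ⟨a, [], t, rfl, hat⟩
      · have : ¬ t.Nodup := fun ht => hnd (List.nodup_cons.2 ⟨hat, ht⟩)
        obtain ⟨e, l₁, l₂, heq, hmem⟩ := ih this
        exact ⟨e, a :: l₁, l₂, by rw [heq]; rfl, hmem⟩
  obtain ⟨e, l₁, l₂, rfl, hmem⟩ := hdup
  obtain ⟨l₃, l₄, rfl⟩ := List.append_of_mem hmem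
  -- split the chain
  obtain ⟨c, hc1, hc2⟩ := chain_split hl
  obtain ⟨hf, b, hDe, hrest⟩ := chain_cons_inv hc2
  obtain ⟨d, hd1, hd2⟩ := chain_split hrest
  obtain ⟨hf2, b2, hDe2, hrest2⟩ := chain_cons_inv hd2
  have hdc : d = c := by rw [hDe] at hDe2; exact (Prod.mk.injEq _ _ _ _ ▸ hDe2).1.symm
  have hb2 : b2 = b := by rw [hDe] at hDe2; exact ((Prod.mk.inj hDe2).2).symm
  subst hdc; subst hb2
  have hshort : Chain D f x y (l₁ ++ e :: l₄) :=
    chain_append hc1 (Chain.cons hf hDe hrest2)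
  have hlt : (l₁ ++ e :: l₄).length < Nat.find hn := by
    rw [← hlen]; simp
  exact Nat.find_min hn hlt ⟨_, hshort, rfl⟩

lemma chain_telescope {D : E → V × V} {f : E → ℤ} {x y : V} {l : List E}
    (h : Chain D f x y l) (hnd : l.Nodup) (w : V) :
    ∑ e ∈ l.toFinset, (- edgeTerm D w e) =
      (if y = w then (1:ℤ) else 0) - (if x = w then 1 else 0) := by
  induction h with
  | nil => simp
  | @cons a b u e l hf hDe h ih =>
    rw [List.toFinset_cons]
    have hnotin : e ∉ l.toFinset := by
      rw [List.mem_toFinset]; exact (List.nodup_cons.1 hnd).1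
    rw [Finset.sum_insert hnotin, ih (List.nodup_cons.1 hnd).2]
    unfold edgeTerm
    rw [hDe]
    by_cases h1 : a = w <;> by_cases h2 : b = w <;> by_cases h3 : u = w <;>
      simp [h1, h2, h3] <;> try ring

def RangesOK [Fintype E] (σ : E → Bool) (p q : ℕ) (f : E → ℤ) : Prop :=
  ∀ e, if σ e then ((q:ℤ) ≤ f e ∧ f e ≤ 2*(p:ℤ) - q)
       else ((0 ≤ f e ∧ f e ≤ (p:ℤ) - q) ∨ ((p:ℤ) + q ≤ f e ∧ f e ≤ 2*(p:ℤ) - 1))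

lemma ranges_nonneg [Fintype E] {σ : E → Bool} {p q : ℕ} {f : E → ℤ}
    (h : RangesOK σ p q f) (e : E) : 0 ≤ f e := by
  have := h e
  split at this
  · have hq : (0:ℤ) ≤ q := Int.natCast_nonneg q
    omega
  · have hq : (0:ℤ) ≤ q := Int.natCast_nonneg q
    have hp : (0:ℤ) ≤ p := Int.natCast_nonneg p
    omega

lemma ranges_rev [Fintype E] {σ : E → Bool} {p q : ℕ} {f : E → ℤ} (hq : 1 ≤ q) (hpq : q ≤ p)
    (h : RangesOK σ p q f) (e : E) (hfe : f e ≠ 0) :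
    if σ e then ((q:ℤ) ≤ 2*(p:ℤ) - f e ∧ 2*(p:ℤ) - f e ≤ 2*(p:ℤ) - q)
    else ((0 ≤ 2*(p:ℤ) - f e ∧ 2*(p:ℤ) - f e ≤ (p:ℤ) - q) ∨
          ((p:ℤ) + q ≤ 2*(p:ℤ) - f e ∧ 2*(p:ℤ) - f e ≤ 2*(p:ℤ) - 1)) := by
  have := h e
  have hq' : (1:ℤ) ≤ q := by exact_mod_cast hq
  have hpq' : (q:ℤ) ≤ p := by exact_mod_cast hpq
  by_cases hσ : σ e = true <;> simp only [hσ, if_true, if_false] at this ⊢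
  · omega
  · rcases this with h | h
    · right; omega
    · left; omega

lemma flowDiff_zero_of_not_mem [Fintype E] {G : Multigraph V E} {D : E → V × V}
    (hD : IsOrientation G D) (f : E → ℤ) {v : V} (hv : v ∉ vSupp G) :
    outSum D f v - inSum D f v = 0 := by
  rw [flowDiff_eq]
  apply Finset.sum_eq_zero
  intro e _
  rw [edgeTerm_not_mem hD e v (fun h => hv (ends_mem_vSupp G e v h))]
  ring

lemma sum_supp_diff_zero [Fintype E] {G : Multigraph V E} {D : E → V × V}
    (hD : IsOrientation G D) (f : E → ℤ) :
    ∑ w ∈ vSupp G, (outSum D f w - inSum D f w) = 0 := by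
  have h1 : ∀ w, outSum D f w - inSum D f w = ∑ e, f e * edgeTerm D w e :=
    fun w => flowDiff_eq D f w
  simp only [h1]
  rw [Finset.sum_comm]
  apply Finset.sum_eq_zero
  intro e _
  unfold edgeTerm
  have h2 : ∑ w ∈ vSupp G, (f e * ((if (D e).1 = w then (1:ℤ) else 0) -
      (if (D e).2 = w then 1 else 0))) =
      f e * ((∑ w ∈ vSupp G, (if (D e).1 = w then (1:ℤ) else 0)) -
        (∑ w ∈ vSupp G, (if (D e).2 = w then (1:ℤ) else 0))) := by
    rw [← Finset.sum_sub_distrib, Finset.mul_sum]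
  rw [h2, Finset.sum_ite_eq, Finset.sum_ite_eq,
    if_pos (mem_vSupp_of_endpoint hD e).1, if_pos (mem_vSupp_of_endpoint hD e).2]
  ring

section Reversal
variable [Fintype E] {G : Multigraph V E} {D : E → V × V} {f : E → ℤ} {p q : ℕ}

lemma rev_orient (hD : IsOrientation G D) (l : List E) :
    IsOrientation G (fun e => if e ∈ l then Prod.swap (D e) else D e) := by
  intro e
  by_cases h : e ∈ l <;> simp only [h, if_true, if_false]
  · rw [← hD e]; exact Sym2.eq_swap
  · exact hD e

lemma rev_ranges {σ : E → Bool} (hq : 1 ≤ q) (hpq : q ≤ p) (hR : RangesOK σ p q f)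
    {x y : V} {l : List E} (hc : Chain D f x y l) :
    RangesOK σ p q (fun e => if e ∈ l then 2*(p:ℤ) - f e else f e) := by
  intro e
  by_cases h : e ∈ l <;> simp only [h, if_true, if_false]
  · exact ranges_rev hq hpq hR e (chain_mem_ne_zero hc h)
  · exact hR e

lemma rev_flowDiff {x y : V} {l : List E} (hc : Chain D f x y l) (hnd : l.Nodup) (w : V) :
    outSum (fun e => if e ∈ l then Prod.swap (D e) else D e)
        (fun e => if e ∈ l then 2*(p:ℤ) - f e else f e) w -
      inSum (fun e => if e ∈ l then Prod.swap (D e) else D e)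
        (fun e => if e ∈ l then 2*(p:ℤ) - f e else f e) w =
    (outSum D f w - inSum D f w) +
      2*(p:ℤ) * ((if y = w then (1:ℤ) else 0) - (if x = w then 1 else 0)) := by
  rw [flowDiff_eq, flowDiff_eq D f w, ← chain_telescope hc hnd w, Finset.mul_sum]
  have hfil : l.toFinset = univ.filter (fun e => e ∈ l) := by ext e; simp
  rw [hfil, Finset.sum_filter, ← Finset.sum_add_distrib]
  apply Finset.sum_congr rfl
  intro e _
  by_cases h : e ∈ l
  · simp only [h, if_true]
    have het : edgeTerm (fun e => if e ∈ l then Prod.swap (D e) else D e) w e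
        = - edgeTerm D w e := by
      unfold edgeTerm; simp only [h, if_true]; simp [Prod.swap]
    rw [het]; ring
  · simp only [h, if_false]
    have het : edgeTerm (fun e => if e ∈ l then Prod.swap (D e) else D e) w e
        = edgeTerm D w e := by
      unfold edgeTerm; simp only [h, if_false]
    rw [het]; ring

end Reversal

lemma exact_of_mod [Fintype E] (G : Multigraph V E) (σ : E → Bool) (p q : ℕ)
    (hq : 1 ≤ q) (hpq : q ≤ p) :
    ∀ N : ℕ, ∀ D : E → V × V, ∀ f : E → ℤ, IsOrientation G D → RangesOK σ p q f →
    (∀ v, (2*(p:ℤ)) ∣ (outSum D f v - inSum D f v)) →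
    (∑ v ∈ vSupp G, (outSum D f v - inSum D f v).natAbs) ≤ N →
    ∃ D₂ f₂, IsOrientation G D₂ ∧ RangesOK σ p q f₂ ∧
      ∀ v, outSum D₂ f₂ v = inSum D₂ f₂ v := by
  intro N
  induction N with
  | zero =>
    intro D f hD hR hmod hT
    refine ⟨D, f, hD, hR, fun v => ?_⟩
    by_cases hv : v ∈ vSupp G
    · have h0 : (outSum D f v - inSum D f v).natAbs = 0 := by
        have := Finset.sum_eq_zero_iff.1 (Nat.le_zero.1 hT) v hv
        exact this
      omega
    · have := flowDiff_zero_of_not_mem hD f hv; omega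
  | succ N ih =>
    intro D f hD hR hmod hT
    by_cases hz : ∀ v, outSum D f v - inSum D f v = 0
    · exact ⟨D, f, hD, hR, fun v => by have := hz v; omega⟩
    push_neg at hz
    obtain ⟨v₀, hv₀⟩ := hz
    have hv₀s : v₀ ∈ vSupp G := by
      by_contra h; exact hv₀ (flowDiff_zero_of_not_mem hD f h)
    have hsum0 : ∑ w ∈ vSupp G, (outSum D f w - inSum D f w) = 0 :=
      sum_supp_diff_zero hD f
    -- find v with positive excess
    have hex : ∃ v ∈ vSupp G, 0 < outSum D f v - inSum D f v := by
      by_contra hall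
      push_neg at hall
      rcases lt_or_gt_of_ne hv₀ with hneg | hpos
      · have hlt : ∑ w ∈ vSupp G, (outSum D f w - inSum D f w) <
            ∑ w ∈ vSupp G, (0:ℤ) := by
          apply Finset.sum_lt_sum (fun i hi => hall i hi) ⟨v₀, hv₀s, hneg⟩
        simp [hsum0] at hlt
      · exact absurd hpos (not_lt.2 (hall v₀ hv₀s))
    obtain ⟨v, hvs, hvpos⟩ := hex
    -- the reachable set
    set RF := (vSupp G).filter (fun w => Relation.ReflTransGen (Step D f) v w) with hRF
    have hvRF : v ∈ RF := Finset.mem_filter.2 ⟨hvs, Relation.ReflTransGen.refl⟩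
    have hRF_sum : ∑ w ∈ RF, (outSum D f w - inSum D f w) ≤ 0 := by
      have h1 : ∀ w, outSum D f w - inSum D f w = ∑ e, f e * edgeTerm D w e :=
        fun w => flowDiff_eq D f w
      simp only [h1]
      rw [Finset.sum_comm]
      apply Finset.sum_nonpos
      intro e _
      have hsplit : ∑ w ∈ RF, f e * edgeTerm D w e =
          f e * ((if (D e).1 ∈ RF then (1:ℤ) else 0) - (if (D e).2 ∈ RF then 1 else 0)) := by
        unfold edgeTerm
        rw [← Finset.sum_ite_eq RF (D e).1 (fun _ => (1:ℤ)),
          ← Finset.sum_ite_eq RF (D e).2 (fun _ => (1:ℤ)), ← Finset.sum_sub_distrib,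
          Finset.mul_sum]
      rw [hsplit]
      by_cases hf0 : f e = 0
      · rw [hf0]; ring_nf; exact le_refl 0
      by_cases ht : (D e).1 ∈ RF
      · have hh : (D e).2 ∈ RF := by
          rw [hRF, Finset.mem_filter] at ht ⊢
          refine ⟨(mem_vSupp_of_endpoint hD e).2, ht.2.tail ⟨e, hf0, ?_⟩⟩
          exact Prod.mk.eta.symm
        rw [if_pos ht, if_pos hh]; ring_nf; exact le_refl 0
      · rw [if_neg ht]
        have hf : 0 ≤ f e := ranges_nonneg hR e
        by_cases hh : (D e).2 ∈ RF <;> simp [hh] <;> positivity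
    -- find u reachable with negative excess
    have hu : ∃ u ∈ RF, outSum D f u - inSum D f u < 0 := by
      by_contra hall
      push_neg at hall
      have : outSum D f v - inSum D f v ≤ ∑ w ∈ RF, (outSum D f w - inSum D f w) :=
        Finset.single_le_sum (f := fun w => outSum D f w - inSum D f w)
          (fun i hi => hall i hi) hvRF
      omega
    obtain ⟨u, huRF, huneg⟩ := hu
    have hurtg : Relation.ReflTransGen (Step D f) v u := (Finset.mem_filter.1 huRF).2
    have hus : u ∈ vSupp G := (Finset.mem_filter.1 huRF).1
    have hvu : v ≠ u := fun h => by rw [h] at hvpos; omega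
    -- get a nodup chain and reverse it
    obtain ⟨l, hchain, hnd⟩ := chain_nodup (chain_of_rtg hurtg)
    set D₂ := fun e => if e ∈ l then Prod.swap (D e) else D e with hD₂def
    set f₂ := fun e => if e ∈ l then 2*(p:ℤ) - f e else f e with hf₂def
    have hD₂ : IsOrientation G D₂ := rev_orient hD l
    have hR₂ : RangesOK σ p q f₂ := rev_ranges hq hpq hR hchain
    have hdiff : ∀ w, outSum D₂ f₂ w - inSum D₂ f₂ w = (outSum D f w - inSum D f w) +
        2*(p:ℤ) * ((if u = w then (1:ℤ) else 0) - (if v = w then 1 else 0)) :=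
      fun w => rev_flowDiff hchain hnd w
    have hmod₂ : ∀ w, (2*(p:ℤ)) ∣ (outSum D₂ f₂ w - inSum D₂ f₂ w) := by
      intro w
      rw [hdiff w]
      exact dvd_add (hmod w) (Dvd.dvd.mul_right dvd_rfl _)
    have hp1 : 1 ≤ p := le_trans hq hpq
    have hdv : 2*(p:ℤ) ≤ outSum D f v - inSum D f v := Int.le_of_dvd hvpos (hmod v)
    have hdu : outSum D f u - inSum D f u ≤ -(2*(p:ℤ)) := by
      have h2 : (2*(p:ℤ)) ∣ -(outSum D f u - inSum D f u) := (hmod u).neg_right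
      have := Int.le_of_dvd (by omega) h2
      omega
    have hT₂ : (∑ w ∈ vSupp G, (outSum D₂ f₂ w - inSum D₂ f₂ w).natAbs) ≤ N := by
      have hlt : (∑ w ∈ vSupp G, (outSum D₂ f₂ w - inSum D₂ f₂ w).natAbs) <
          (∑ w ∈ vSupp G, (outSum D f w - inSum D f w).natAbs) := by
        apply Finset.sum_lt_sum
        · intro i _
          rw [hdiff i]
          by_cases h1 : u = i <;> by_cases h2 : v = i <;>
            simp only [h1, h2, if_true, if_false] <;> first
              | (exfalso; exact hvu (h2.trans h1.symm))
              | (subst h1; omega)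
              | (subst h2; omega)
              | omega
        · refine ⟨v, hvs, ?_⟩
          rw [hdiff v]
          rw [if_neg (fun h => hvu h.symm), if_pos rfl]
          have hp1' : (1:ℤ) ≤ p := by exact_mod_cast hp1
          omega
      omega
    exact ih D₂ f₂ hD₂ hR₂ hmod₂ hT₂

lemma card_filter_val_lt (k m : ℕ) (h : k ≤ m) :
    (univ.filter (fun i : Fin m => (i : ℕ) < k)).card = k := by
  rcases lt_or_eq_of_le h with hkm | rfl
  · have : (univ.filter (fun i : Fin m => (i:ℕ) < k)) = Iio ⟨k, hkm⟩ := by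
      ext i; simp [Fin.lt_def]
    rw [this, Fin.card_Iio]
  · have : (univ.filter (fun i : Fin k => (i:ℕ) < k)) = univ := by
      ext i; simp [i.isLt]
    rw [this, card_univ, Fintype.card_fin]

lemma core_identity [Fintype E] {m : ℕ} {G : Multigraph V E} {D : E → V × V}
    {D' : E × Fin m → V × V} (hD : IsOrientation G D)
    (hD' : IsOrientation (parallelCopies m G) D') {p : ℕ} (f s : E → ℤ)
    (h2f : ∀ e, 2 * f e = (2 * (agree m D D' e : ℤ) - m) + 2*(p:ℤ) * s e) (v : V) :
    2 * (outSum D f v - inSum D f v) =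
      netDeg D' univ v + 2*(p:ℤ) * ∑ e, s e * edgeTerm D v e := by
  rw [flowDiff_eq, netDeg_copies hD hD', Finset.mul_sum, Finset.mul_sum,
    ← Finset.sum_add_distrib]
  apply Finset.sum_congr rfl
  intro e _
  have h := h2f e
  linear_combination (edgeTerm D v e) * h

-- canonical orientation
noncomputable def canonOrient (G : Multigraph V E) : E → V × V := fun e => (G.ends e).out

lemma canonOrient_is (G : Multigraph V E) : IsOrientation G (canonOrient G) := by
  intro e
  unfold canonOrient
  exact (G.ends e).out_eq

lemma isPQFlow_iff_ranges [Fintype E] (G : Multigraph V E) (σ : E → Bool) (p q : ℕ)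
    (D : E → V × V) (f : E → ℤ) :
    IsPQFlow G σ (2 * (p : ℤ)) (q : ℤ) D f ↔
      (IsOrientation G D ∧ RangesOK σ p q f ∧ ∀ v, outSum D f v = inSum D f v) := by
  have h2 : (2 * (p:ℤ)) / 2 = (p:ℤ) := by omega
  constructor
  · rintro ⟨h1, hpos, hneg, hcons⟩
    refine ⟨h1, ?_, hcons⟩
    intro e
    by_cases hσ : σ e = true
    · rw [if_pos hσ]
      exact hpos e hσ
    · rw [if_neg hσ]
      have hf : σ e = false := by revert hσ; cases σ e <;> simp
      have := hneg e hf
      rw [h2] at this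
      exact this
  · rintro ⟨h1, hR, hcons⟩
    refine ⟨h1, ?_, ?_, hcons⟩
    · intro e he
      have := hR e
      rw [if_pos he] at this
      exact this
    · intro e he
      have := hR e
      rw [if_neg (by rw [he]; simp)] at this
      rw [h2]
      exact this

lemma forward_dir [Fintype E] (G : Multigraph V E) (σ : E → Bool) (p q : ℕ)
    (hq : 1 ≤ q) (hpq : q ≤ p) (D : E → V × V) (f : E → ℤ) (hD : IsOrientation G D)
    (hR : RangesOK σ p q f) (hcons : ∀ v, outSum D f v = inSum D f v) :
    ∃ D' : E × Fin (2 * p - 2 * q) → V × V,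
      IsOrientation (parallelCopies (2 * p - 2 * q) G) D' ∧
      ∀ v, netDeg D' univ v ≡ 2 * (p : ℤ) * (degIn G (posEdges E σ) v : ℤ)
        [ZMOD (4 * (p : ℤ))] := by
  set m := 2 * p - 2 * q with hmdef
  have hm : (m : ℤ) = 2*(p:ℤ) - 2*(q:ℤ) := by omega
  have hq' : (1:ℤ) ≤ q := by exact_mod_cast hq
  have hpq' : (q:ℤ) ≤ p := by exact_mod_cast hpq
  set a : E → ℕ := fun e =>
    (if σ e then f e - q else if f e ≤ (p:ℤ) - q then f e + p - q else f e - p - q).toNat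
    with hadef
  have haz : ∀ e, (a e : ℤ) =
      if σ e then f e - q else if f e ≤ (p:ℤ) - q then f e + p - q else f e - p - q := by
    intro e
    simp only [hadef]
    apply Int.toNat_of_nonneg
    have := hR e
    by_cases hσ : σ e = true
    · rw [if_pos hσ] at this ⊢
      omega
    · rw [if_neg hσ] at this ⊢
      rcases this with h | h <;> split <;> omega
  have ham : ∀ e, a e ≤ m := by
    intro e
    have h2 := hR e
    have hle : (a e : ℤ) ≤ (m : ℤ) := by
      rw [haz e, hm]
      by_cases hσ : σ e = true
      · rw [if_pos hσ] at h2 ⊢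
        omega
      · rw [if_neg hσ] at h2 ⊢
        rcases h2 with h | h <;> split <;> omega
    exact_mod_cast hle
  set D' : E × Fin m → V × V :=
    fun x => if (x.2 : ℕ) < a x.1 then D x.1 else Prod.swap (D x.1) with hD'def
  have hD' : IsOrientation (parallelCopies m G) D' := by
    intro x
    simp only [hD'def]
    have hpe : (parallelCopies m G).ends x = G.ends x.1 := rfl
    split
    · exact hD x.1
    · rw [hpe, ← hD x.1, Prod.fst_swap, Prod.snd_swap]
      exact Sym2.eq_swap
  have hagree : ∀ e, agree m D D' e = a e := by
    intro e
    unfold agree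
    have heq : (univ.filter (fun i : Fin m => D' (e, i) = D e)) =
        (univ.filter (fun i : Fin m => (i : ℕ) < a e)) := by
      apply Finset.filter_congr
      intro i _
      simp only [hD'def]
      constructor
      · intro h
        by_contra hlt
        rw [if_neg hlt] at h
        have h1 := congrArg Prod.fst h
        rw [Prod.fst_swap] at h1
        exact orient_ne hD e h1.symm
      · intro h; rw [if_pos h]
    rw [heq, card_filter_val_lt _ _ (ham e)]
  set s : E → ℤ := fun e => if σ e then 1 else if f e ≤ (p:ℤ) - q then 0 else 2 with hsdef
  have hs : ∀ e, (2:ℤ) ∣ (s e - if σ e then 1 else 0) := by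
    intro e
    simp only [hsdef]
    by_cases hσ : σ e = true
    · rw [if_pos hσ, if_pos hσ]
      omega
    · rw [if_neg hσ, if_neg hσ]
      split <;> omega
  have h2f : ∀ e, 2 * f e = (2 * (agree m D D' e : ℤ) - m) + 2*(p:ℤ) * s e := by
    intro e
    simp only [hsdef]
    rw [hagree e, haz e, hm]
    by_cases hσ : σ e = true
    · rw [if_pos hσ, if_pos hσ]
      ring
    · rw [if_neg hσ, if_neg hσ]
      split <;> omega
  refine ⟨D', hD', fun v => ?_⟩
  rw [Int.modEq_iff_dvd]
  have hcore := core_identity hD hD' f s h2f v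
  have hdz : outSum D f v - inSum D f v = 0 := by rw [hcons v]; ring
  rw [hdz, mul_zero] at hcore
  obtain ⟨k, hk⟩ := parity_sum hD σ s hs v
  refine ⟨k + (degIn G (posEdges E σ) v : ℤ), ?_⟩
  linear_combination hcore + 2*(p:ℤ)*hk

lemma backward_dir [Fintype E] (G : Multigraph V E) (σ : E → Bool) (p q : ℕ)
    (hq : 1 ≤ q) (hpq : q ≤ p) (D' : E × Fin (2 * p - 2 * q) → V × V)
    (hD' : IsOrientation (parallelCopies (2 * p - 2 * q) G) D')
    (hcong : ∀ v, netDeg D' univ v ≡ 2 * (p : ℤ) * (degIn G (posEdges E σ) v : ℤ)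
      [ZMOD (4 * (p : ℤ))]) :
    ∃ (D : E → V × V) (f : E → ℤ), IsOrientation G D ∧ RangesOK σ p q f ∧
      ∀ v, outSum D f v = inSum D f v := by
  have hm : ((2 * p - 2 * q : ℕ) : ℤ) = 2*(p:ℤ) - 2*(q:ℤ) := by omega
  have hq' : (1:ℤ) ≤ q := by exact_mod_cast hq
  have hpq' : (q:ℤ) ≤ p := by exact_mod_cast hpq
  set D : E → V × V := canonOrient G with hDdef
  have hD : IsOrientation G D := canonOrient_is G
  set a : E → ℕ := fun e => agree (2 * p - 2 * q) D D' e with hadef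
  have ham : ∀ e, (a e : ℤ) ≤ ((2 * p - 2 * q : ℕ) : ℤ) := by
    intro e
    have : a e ≤ 2 * p - 2 * q := by
      simp only [hadef]
      exact agree_le (2 * p - 2 * q) D D' e
    exact_mod_cast this
  set f : E → ℤ := fun e => if σ e then (a e : ℤ) + q
    else if (p:ℤ) - q ≤ (a e : ℤ) then (a e : ℤ) - ((p:ℤ) - q) else (a e : ℤ) + p + q
    with hfdef
  set s : E → ℤ := fun e => if σ e then 1
    else if (p:ℤ) - q ≤ (a e : ℤ) then 0 else 2 with hsdef
  have hR : RangesOK σ p q f := by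
    intro e
    have hme := ham e
    rw [hm] at hme
    have haz : (0:ℤ) ≤ a e := Int.natCast_nonneg _
    simp only [hfdef]
    by_cases hσ : σ e = true
    · rw [if_pos hσ, if_pos hσ]
      omega
    · rw [if_neg hσ, if_neg hσ]
      split
      · left; omega
      · right; omega
  have hs : ∀ e, (2:ℤ) ∣ (s e - if σ e then 1 else 0) := by
    intro e
    simp only [hsdef]
    by_cases hσ : σ e = true
    · rw [if_pos hσ, if_pos hσ]
      omega
    · rw [if_neg hσ, if_neg hσ]
      split <;> omega
  have h2f : ∀ e, 2 * f e = (2 * (agree (2 * p - 2 * q) D D' e : ℤ) - ((2 * p - 2 * q : ℕ) : ℤ)) + 2*(p:ℤ) * s e := by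
    intro e
    have hag : agree (2 * p - 2 * q) D D' e = a e := by rw [hadef]
    simp only [hfdef, hsdef]
    rw [hag, hm]
    by_cases hσ : σ e = true
    · rw [if_pos hσ, if_pos hσ]
      ring
    · rw [if_neg hσ, if_neg hσ]
      split <;> omega
  have hmod : ∀ v, (2*(p:ℤ)) ∣ (outSum D f v - inSum D f v) := by
    intro v
    have hcore := core_identity hD hD' f s h2f v
    obtain ⟨k, hk⟩ := parity_sum hD σ s hs v
    obtain ⟨c, hc⟩ := Int.modEq_iff_dvd.1 (hcong v)
    refine ⟨(degIn G (posEdges E σ) v : ℤ) + k - c, ?_⟩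
    have h2 : 2 * (outSum D f v - inSum D f v) =
        2 * (2*(p:ℤ) * ((degIn G (posEdges E σ) v : ℤ) + k - c)) := by
      linear_combination hcore + 2*(p:ℤ)*hk - hc
    exact mul_left_cancel₀ (by norm_num : (2:ℤ) ≠ 0) h2
  exact exact_of_mod G σ p q hq hpq
    (∑ v ∈ vSupp G, (outSum D f v - inSum D f v).natAbs) D f hD hR hmod le_rfl

/-- For `p ≥ q ≥ 1`, a signed graph `(G, σ)` admits a `(2p, q)`-flow iff the
graph `(2p-2q)G` admits an orientation in which, at every vertex `v`,
the out-degree minus the in-degree is congruent to `2p · d⁺(v)` modulo `4p`. -/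
theorem pqFlow_iff_orientation_parallelCopies [Fintype E]
    (G : Multigraph V E) (σ : E → Bool) (p q : ℕ) (hq : 1 ≤ q) (hpq : q ≤ p) :
    (∃ (D : E → V × V) (f : E → ℤ), IsPQFlow G σ (2 * (p : ℤ)) (q : ℤ) D f) ↔
      (∃ D' : E × Fin (2 * p - 2 * q) → V × V,
        IsOrientation (parallelCopies (2 * p - 2 * q) G) D' ∧
        ∀ v, netDeg D' univ v ≡
          2 * (p : ℤ) * (degIn G (posEdges E σ) v : ℤ) [ZMOD (4 * (p : ℤ))]) := by
  constructor
  · rintro ⟨D, f, hflow⟩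
    obtain ⟨hD, hR, hcons⟩ := (isPQFlow_iff_ranges G σ p q D f).1 hflow
    exact forward_dir G σ p q hq hpq D f hD hR hcons
  · rintro ⟨D', hD', hcong⟩
    obtain ⟨D, f, hD, hR, hcons⟩ := backward_dir G σ p q hq hpq D' hD' hcong
    exact ⟨D, f, (isPQFlow_iff_ranges G σ p q D f).2 ⟨hD, hR, hcons⟩⟩
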